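/- arXiv:1608.08079 — 2 statements merged into one kernel-verified Lean document; each statement's English description precedes it below -/
import Mathlib

section
/- Let b₁, b₂ ∈ (-1,1) and c ∈ R, and let α₀ = (b₁+ic)/(1+ic), α₁ = (b₂-ic)/(1+ic). Define the monic orthogonal polynomials by φ₀(z)=1, φ_{n+1}(z) = zφ_n(z) - conj(α_n)·φ_n*(z), where φ_n*(z) = z^n·conj(φ_n(1/conj(z))) is the reversed polynomial, and set φ₂*(z) accordingly. Then the equation φ₂(z) - φ₂*(z) = 0 has exactly the two solutions z = 1 and z = (c²-1)/(1+c²) - i·2c/(1+c²) on C. -/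
/-!
Unrolling the recursion gives `φ₂ = z² + a z + b` with `a = ᾱ₁α₀ - ᾱ₀` and `b = -ᾱ₁`, so
`φ₂ - φ₂* = (1 - b̄) z² + (a - ā) z + (b - 1)`. At `z = 1` this is `φ₂(1) - conj φ₂(1)`, which
vanishes because `φ₂(1) = (1 - b₁)(1 - b₂)/(1 + c²)` is real. The leading coefficient
`1 - b̄ = 1 + α₁ = (1 + b₂)/(1 + ic)` is nonzero, so by Vieta the other root is
`(b - 1)/(1 - b̄) = -(1 + ic)/(1 - ic)`.
-/

open Polynomial Complex ComplexConjugate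

theorem szego_phi_two {α : ℕ → ℂ} {φ : ℕ → ℂ[X]} (hφ0 : φ 0 = 1)
    (hφ : ∀ n, φ (n + 1) = X * φ n - C (conj (α n)) * reflect n ((φ n).map conj)) :
    φ 2 = X ^ 2 + C (conj (α 1) * α 0 - conj (α 0)) * X + C (-conj (α 1)) := by
  have hφ1 : φ 1 = X - C (conj (α 0)) := by simp [hφ 0, hφ0]
  rw [hφ 1, hφ1, Polynomial.map_sub, map_X, map_C, conj_conj, reflect_sub, reflect_one_X,
    reflect_C]
  simp only [map_sub, map_mul, map_neg]
  ring

theorem eval_sub_reflect_map_conj_quadratic (a b z : ℂ) :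
    (X ^ 2 + C a * X + C b - reflect 2 ((X ^ 2 + C a * X + C b).map conj)).eval z =
      (1 - conj b) * z ^ 2 + (a - conj a) * z + (b - 1) := by
  have hX : reflect 2 (X : ℂ[X]) = X := by
    simpa [revAt_le] using reflect_monomial (R := ℂ) 2 1
  have hrefl : reflect 2 ((X ^ 2 + C a * X + C b : ℂ[X]).map conj) =
      C (conj b) * X ^ 2 + C (conj a) * X + 1 := by
    simp only [Polynomial.map_add, Polynomial.map_mul, Polynomial.map_pow, map_X, map_C,
      reflect_add, reflect_C_mul, reflect_monomial, reflect_C, hX, revAt_le le_rfl, Nat.sub_self,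
      pow_zero]
    ring
  rw [eval_sub, hrefl]
  simp only [eval_add, eval_mul, eval_pow, eval_C, eval_X, eval_one]
  ring

theorem sub_reverse_quadratic_eq_zero_iff {a b : ℂ} (hreal : conj (1 + a + b) = 1 + a + b)
    (hb : conj b ≠ 1) (z : ℂ) :
    (1 - conj b) * z ^ 2 + (a - conj a) * z + (b - 1) = 0 ↔
      z = 1 ∨ z = (b - 1) / (1 - conj b) := by
  have hlead : 1 - conj b ≠ 0 := sub_ne_zero.mpr hb.symm
  have hlin : a - conj a = conj b - b := by
    simp only [map_add, map_one] at hreal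
    linear_combination -hreal
  have hfac : (1 - conj b) * z ^ 2 + (a - conj a) * z + (b - 1) =
      (1 - conj b) * ((z - 1) * (z - (b - 1) / (1 - conj b))) := by
    rw [hlin]
    field_simp
    ring
  rw [hfac, mul_eq_zero, or_iff_right hlead, mul_eq_zero, sub_eq_zero, sub_eq_zero]

theorem one_add_I_mul_ofReal_ne_zero (c : ℝ) : 1 + I * c ≠ 0 := by
  intro h
  simpa using congrArg re h

theorem one_sub_I_mul_ofReal_ne_zero (c : ℝ) : 1 - I * c ≠ 0 := by
  intro h
  simpa using congrArg re h

theorem one_add_sq_ofReal_ne_zero (c : ℝ) : (1 : ℂ) + c ^ 2 ≠ 0 := by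
  exact_mod_cast (by positivity : (1 : ℝ) + c ^ 2 ≠ 0)

-- The left-hand side is `φ₂(1)`.
theorem one_add_szego_coeffs_eq_ofReal (b₁ b₂ c : ℝ) {α₀ α₁ : ℂ}
    (hα₀ : α₀ = (b₁ + I * c) / (1 + I * c)) (hα₁ : α₁ = (b₂ - I * c) / (1 + I * c)) :
    1 + (conj α₁ * α₀ - conj α₀) + -conj α₁ = ((1 - b₁) * (1 - b₂) / (1 + c ^ 2) : ℝ) := by
  have := one_add_I_mul_ofReal_ne_zero c
  have := one_sub_I_mul_ofReal_ne_zero c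
  have := one_add_sq_ofReal_ne_zero c
  subst hα₀ hα₁
  simp only [map_div₀, map_add, map_sub, map_mul, map_one, conj_I, conj_ofReal, neg_mul,
    ← sub_eq_add_neg]
  push_cast
  field_simp
  have := I_sq
  grind

theorem one_add_alpha_ne_zero {b₂ c : ℝ} (hb₂ : -1 < b₂) {α₁ : ℂ}
    (hα₁ : α₁ = (b₂ - I * c) / (1 + I * c)) : 1 + α₁ ≠ 0 := by
  have hd := one_add_I_mul_ofReal_ne_zero c
  have hb : (1 : ℂ) + b₂ ≠ 0 := by exact_mod_cast (by linarith : (1 : ℝ) + b₂ ≠ 0)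
  have h : 1 + α₁ = (1 + b₂) / (1 + I * c) := by
    rw [hα₁]
    field_simp
    ring
  rw [h]
  exact div_ne_zero hb hd

theorem szego_second_root_eq {b₂ c : ℝ} (hb₂ : -1 < b₂) {α₁ : ℂ}
    (hα₁ : α₁ = (b₂ - I * c) / (1 + I * c)) :
    (-conj α₁ - 1) / (1 - conj (-conj α₁)) =
      (((c ^ 2 - 1) / (1 + c ^ 2) : ℝ) : ℂ) - I * ((2 * c / (1 + c ^ 2) : ℝ) : ℂ) := by
  have := one_add_I_mul_ofReal_ne_zero c
  have := one_sub_I_mul_ofReal_ne_zero c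
  have := one_add_sq_ofReal_ne_zero c
  have : (1 : ℂ) + b₂ ≠ 0 := by exact_mod_cast (by linarith : (1 : ℝ) + b₂ ≠ 0)
  subst hα₁
  simp only [map_div₀, map_add, map_sub, map_mul, map_one, conj_I, conj_ofReal, map_neg, neg_mul,
    ← sub_eq_add_neg]
  push_cast
  field_simp
  have := I_sq
  grind

theorem stmt_14_general (b₁ b₂ c : ℝ) (hb₂ : b₂ ∈ Set.Ioo (-1 : ℝ) 1)
    (α : ℕ → ℂ)
    (hα0 : α 0 = ((b₁ : ℂ) + I * (c : ℂ)) / (1 + I * (c : ℂ)))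
    (hα1 : α 1 = ((b₂ : ℂ) - I * (c : ℂ)) / (1 + I * (c : ℂ)))
    (φ : ℕ → Polynomial ℂ)
    (hφ0 : φ 0 = 1)
    (hφ : ∀ n, φ (n + 1) = X * φ n -
      Polynomial.C (starRingEnd ℂ (α n)) * Polynomial.reflect n ((φ n).map (starRingEnd ℂ))) :
    ∀ z : ℂ, (φ 2 - Polynomial.reflect 2 ((φ 2).map (starRingEnd ℂ))).eval z = 0 ↔
      (z = 1 ∨ z = (((c ^ 2 - 1) / (1 + c ^ 2) : ℝ) : ℂ) - I * ((2 * c / (1 + c ^ 2) : ℝ) : ℂ)) := by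
  intro z
  have hreal : conj (1 + (conj (α 1) * α 0 - conj (α 0)) + -conj (α 1)) =
      1 + (conj (α 1) * α 0 - conj (α 0)) + -conj (α 1) := by
    rw [one_add_szego_coeffs_eq_ofReal b₁ b₂ c hα0 hα1, conj_ofReal]
  have hlead : conj (-conj (α 1)) ≠ 1 := by
    rw [map_neg, conj_conj, Ne, neg_eq_iff_eq_neg, eq_neg_iff_add_eq_zero, add_comm]
    exact one_add_alpha_ne_zero hb₂.1 hα1
  rw [szego_phi_two hφ0 hφ, eval_sub_reflect_map_conj_quadratic,
    sub_reverse_quadratic_eq_zero_iff hreal hlead, szego_second_root_eq hb₂.1 hα1]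

theorem stmt_14 (b₁ b₂ c : ℝ) (hb₁ : b₁ ∈ Set.Ioo (-1 : ℝ) 1) (hb₂ : b₂ ∈ Set.Ioo (-1 : ℝ) 1)
    (α : ℕ → ℂ)
    (hα0 : α 0 = ((b₁ : ℂ) + I * (c : ℂ)) / (1 + I * (c : ℂ)))
    (hα1 : α 1 = ((b₂ : ℂ) - I * (c : ℂ)) / (1 + I * (c : ℂ)))
    (φ : ℕ → Polynomial ℂ)
    (hφ0 : φ 0 = 1)
    (hφ : ∀ n, φ (n + 1) = X * φ n -
      Polynomial.C (starRingEnd ℂ (α n)) * Polynomial.reflect n ((φ n).map (starRingEnd ℂ))) :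
    ∀ z : ℂ, (φ 2 - Polynomial.reflect 2 ((φ 2).map (starRingEnd ℂ))).eval z = 0 ↔
      (z = 1 ∨ z = (((c ^ 2 - 1) / (1 + c ^ 2) : ℝ) : ℂ) - I * ((2 * c / (1 + c ^ 2) : ℝ) : ℂ)) :=
  stmt_14_general b₁ b₂ c hb₂ α hα0 hα1 φ hφ0 hφ
end

section
/- Let b₁, b₂ ∈ (-1,1), c ∈ R, and define the 2-periodic sequence α_{2n} = (b₁+ic)/(1+ic), α_{2n+1} = (b₂-ic)/(1+ic). With w = 1 and τ_0(1)=1, τ_{j+1}(1) = (τ_j(1) - conj(α_j))/(1 - τ_j(1)α_j), set q_j = |1 - τ_{j-1}(1)α_{j-1}|²/(1-|α_{j-1}|²). Then q₁q₂ < 1 if and only if b₁ + b₂ > 0, and in that case (1 - q₁q₂)/((1 - q₁q₂) + (q₁ + q₁q₂)) = (b₁+b₂)/(1+b₂). -/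
/-!
With `ζ = 1 + ic` one has `1 - α₀ = (1 - b₁)/ζ` with `1 - b₁` real, so the first Schur step
turns `τ₀ = 1` into the unimodular `τ₁ = ζ / conj ζ`, and then `1 - τ₁α₁ = (1 - b₂) / conj ζ`.
Since `‖ζ‖² = 1 + c²` and `‖b ± ic‖² = b² + c²`, the parameter `c` cancels and
`q_j = (1 - b_j)/(1 + b_j)`; what remains is elementary algebra in `b₁, b₂`.
-/

open Complex ComplexConjugate

lemma sq_norm_ofReal_add_I_mul (x y : ℝ) : ‖(x : ℂ) + I * y‖ ^ 2 = x ^ 2 + y ^ 2 := by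
  rw [Complex.sq_norm, mul_comm, normSq_add_mul_I]

lemma sq_norm_ofReal_sub_I_mul (x y : ℝ) : ‖(x : ℂ) - I * y‖ ^ 2 = x ^ 2 + y ^ 2 := by
  simpa [sub_eq_add_neg] using sq_norm_ofReal_add_I_mul x (-y)

lemma one_add_I_mul_ne_zero (c : ℝ) : (1 : ℂ) + I * c ≠ 0 :=
  fun h => by simpa using congrArg re h

lemma sq_norm_one_add_I_mul (c : ℝ) : ‖(1 : ℂ) + I * c‖ ^ 2 = 1 + c ^ 2 := by
  simpa using sq_norm_ofReal_add_I_mul 1 c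

lemma one_sub_ofReal_add_I_mul_div (b c : ℝ) :
    1 - (b + I * c) / (1 + I * c) = ((1 - b : ℝ) : ℂ) / (1 + I * c) := by
  have := one_add_I_mul_ne_zero c
  field_simp
  push_cast
  ring

lemma one_sub_div_conj_mul_ofReal_sub_I_mul_div (b c : ℝ) :
    1 - (1 + I * c) / conj (1 + I * c) * ((b - I * c) / (1 + I * c)) =
      ((1 - b : ℝ) : ℂ) / conj (1 + I * c) := by
  have hζ := one_add_I_mul_ne_zero c
  have hζ' : conj (1 + I * c) ≠ 0 := (map_ne_zero _).mpr hζ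
  have hconj : conj (1 + I * c) = 1 - I * c := by simp [sub_eq_add_neg]
  field_simp
  rw [hconj]
  push_cast
  ring

lemma one_sub_conj_div_one_sub_eq_div_conj {α z : ℂ} {r : ℝ} (hz : z ≠ 0) (hr : r ≠ 0)
    (h : 1 - α = r / z) : (1 - conj α) / (1 - α) = z / conj z := by
  have h' : 1 - conj α = r / conj z := by
    simpa only [map_sub, map_one, map_div₀, conj_ofReal] using congrArg conj h
  have hz' : conj z ≠ 0 := (map_ne_zero _).mpr hz
  have hr' : (r : ℂ) ≠ 0 := ofReal_ne_zero.mpr hr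
  rw [h', h]
  field_simp

lemma sq_norm_div_div_one_sub_sq_norm_div {b c : ℝ} (hb : b ∈ Set.Ioo (-1 : ℝ) 1)
    {z z' w : ℂ} (hz : ‖z‖ ^ 2 = 1 + c ^ 2) (hz' : ‖z'‖ = ‖z‖) (hw : ‖w‖ ^ 2 = b ^ 2 + c ^ 2) :
    ‖((1 - b : ℝ) : ℂ) / z'‖ ^ 2 / (1 - ‖w / z‖ ^ 2) = (1 - b) / (1 + b) := by
  obtain ⟨hb₀, hb₁⟩ := hb
  rw [norm_div, norm_div, div_pow, div_pow, hz', hz, hw, norm_real, Real.norm_eq_abs, sq_abs]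
  have h₀ : 1 - b ≠ 0 := by linarith
  have h₁ : 1 + b ≠ 0 := by linarith
  rw [show 1 - (b ^ 2 + c ^ 2) / (1 + c ^ 2) = (1 - b) * (1 + b) / (1 + c ^ 2) by field_simp; ring]
  field_simp

lemma div_mul_div_lt_one_iff {b₁ b₂ : ℝ} (hb₁ : -1 < b₁) (hb₂ : -1 < b₂) :
    (1 - b₁) / (1 + b₁) * ((1 - b₂) / (1 + b₂)) < 1 ↔ 0 < b₁ + b₂ := by
  have hD : 0 < (1 + b₁) * (1 + b₂) := by nlinarith
  rw [div_mul_div_comm, div_lt_one hD]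
  constructor <;> intro h <;> nlinarith

lemma pure_point_mass_eq {b₁ b₂ q₁ q₂ : ℝ} (hb₁ : -1 < b₁) (hb₂ : -1 < b₂)
    (hq₁ : q₁ = (1 - b₁) / (1 + b₁)) (hq₂ : q₂ = (1 - b₂) / (1 + b₂)) :
    (1 - q₁ * q₂) / ((1 - q₁ * q₂) + (q₁ + q₁ * q₂)) = (b₁ + b₂) / (1 + b₂) := by
  have h₁ : 1 + b₁ ≠ 0 := by linarith
  have h₂ : 1 + b₂ ≠ 0 := by linarith
  have hsum : (1 - q₁ * q₂) + (q₁ + q₁ * q₂) = 2 / (1 + b₁) := by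
    rw [hq₁]
    field_simp
    ring
  have hnum : 1 - q₁ * q₂ = 2 * (b₁ + b₂) / ((1 + b₁) * (1 + b₂)) := by
    rw [hq₁, hq₂]
    field_simp
    ring
  rw [hsum, hnum]
  field_simp

theorem stmt_15 (b₁ b₂ c : ℝ) (hb₁ : b₁ ∈ Set.Ioo (-1 : ℝ) 1) (hb₂ : b₂ ∈ Set.Ioo (-1 : ℝ) 1)
    (α : ℕ → ℂ)
    (hα0 : ∀ n, α (2 * n) = ((b₁ : ℂ) + I * (c : ℂ)) / (1 + I * (c : ℂ)))
    (hα1 : ∀ n, α (2 * n + 1) = ((b₂ : ℂ) - I * (c : ℂ)) / (1 + I * (c : ℂ)))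
    (τ : ℕ → ℂ) (hτ0 : τ 0 = 1)
    (hτ : ∀ j, τ (j + 1) = (τ j - starRingEnd ℂ (α j)) / (1 - τ j * α j))
    (q : ℕ → ℝ)
    (hq : ∀ j, 1 ≤ j → q j =
      ‖1 - τ (j - 1) * α (j - 1)‖ ^ 2 / (1 - ‖α (j - 1)‖ ^ 2)) :
    (q 1 * q 2 < 1 ↔ 0 < b₁ + b₂) ∧
    (0 < b₁ + b₂ →
      (1 - q 1 * q 2) / ((1 - q 1 * q 2) + (q 1 + q 1 * q 2)) = (b₁ + b₂) / (1 + b₂)) := by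
  have hα₀ : α 0 = (b₁ + I * c) / (1 + I * c) := hα0 0
  have hα₁ : α 1 = (b₂ - I * c) / (1 + I * c) := hα1 0
  have hτ₁ : τ 1 = (1 + I * c) / conj (1 + I * c) := by
    rw [hτ 0, hτ0, one_mul]
    refine one_sub_conj_div_one_sub_eq_div_conj (one_add_I_mul_ne_zero c) (r := 1 - b₁)
      (by linarith [hb₁.2]) ?_
    rw [hα₀, one_sub_ofReal_add_I_mul_div]
  have hq₁ : q 1 = (1 - b₁) / (1 + b₁) := by
    rw [hq 1 le_rfl, Nat.sub_self, hτ0, one_mul, hα₀, one_sub_ofReal_add_I_mul_div]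
    exact sq_norm_div_div_one_sub_sq_norm_div hb₁ (sq_norm_one_add_I_mul c) rfl
      (sq_norm_ofReal_add_I_mul b₁ c)
  have hq₂ : q 2 = (1 - b₂) / (1 + b₂) := by
    rw [hq 2 (by norm_num), show 2 - 1 = 1 from rfl, hτ₁, hα₁,
      one_sub_div_conj_mul_ofReal_sub_I_mul_div]
    exact sq_norm_div_div_one_sub_sq_norm_div hb₂ (sq_norm_one_add_I_mul c) (norm_conj _)
      (sq_norm_ofReal_sub_I_mul b₂ c)
  refine ⟨?_, fun _ => pure_point_mass_eq hb₁.1 hb₂.1 hq₁ hq₂⟩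
  rw [hq₁, hq₂]
  exact div_mul_div_lt_one_iff hb₁.1 hb₂.1
end
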